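/- Let ε ≥ 0, C_0, D_0 ∈ ℝ, set θ = (π + ε)/2 and define the sequence y(n) = C_0·cos(nθ) + D_0·sin(nθ) for n ∈ ℕ. Then for every n, |y(n+2) + ε·y(n+1) + y(n)| ≤ (|C_0| + |D_0|)·ε³/24. In particular, y is a globally valid asymptotic solution, uniformly in n, of the difference equation y(n+2) + ε y(n+1) + y(n) = 0. -/

import Mathlib

/-!
The exact solutions `C cos (nθ) + D sin (nθ)` satisfy `y(n+2) - 2 cos θ · y(n+1) + y(n) = 0`,
and for `θ = (π + ε)/2` one has `2 cos θ = -2 sin (ε/2)`. So the residual of the perturbed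
equation is `(ε - 2 sin (ε/2)) · y(n+1)`, where `|y(n+1)| ≤ |C₀| + |D₀|` and
`0 ≤ ε - 2 sin (ε/2) ≤ ε³/24` by `t - t³/6 ≤ sin t ≤ t`.
-/

open Real

lemma abs_mul_cos_add_mul_sin_le (C D x : ℝ) : |C * cos x + D * sin x| ≤ |C| + |D| :=
  calc |C * cos x + D * sin x|
      ≤ |C| * |cos x| + |D| * |sin x| := by
        simpa only [abs_mul] using abs_add_le (C * cos x) (D * sin x)
    _ ≤ |C| * 1 + |D| * 1 := by
        gcongr
        exacts [abs_cos_le_one x, abs_sin_le_one x]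
    _ = |C| + |D| := by ring

lemma mul_cos_add_mul_sin_add_two_mul_add (C D x θ : ℝ) :
    C * cos (x + 2 * θ) + D * sin (x + 2 * θ) + (C * cos x + D * sin x) =
      2 * cos θ * (C * cos (x + θ) + D * sin (x + θ)) := by
  have hcos : cos (x + 2 * θ) + cos x = 2 * cos (x + θ) * cos θ := by
    rw [cos_add_cos]; ring_nf
  have hsin : sin (x + 2 * θ) + sin x = 2 * sin (x + θ) * cos θ := by
    rw [sin_add_sin]; ring_nf
  linear_combination C * hcos + D * hsin

lemma abs_sub_two_mul_sin_half_le {ε : ℝ} (hε : 0 ≤ ε) :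
    |ε - 2 * sin (ε / 2)| ≤ ε ^ 3 / 24 := by
  have hle : sin (ε / 2) ≤ ε / 2 := sin_le (by positivity)
  have hge : ε / 2 - (ε / 2) ^ 3 / 6 ≤ sin (ε / 2) := sin_ge_sub_cube (by positivity)
  rw [abs_le]
  constructor <;> nlinarith

/-- The renormalization-method solution `y(n) = C₀ cos(nθ) + D₀ sin(nθ)` with
`θ = (π+ε)/2` solves the perturbed difference equation
`y(n+2) + ε y(n+1) + y(n) = 0` uniformly up to `(|C₀|+|D₀|)·ε³/24`. -/
theorem perturbed_difference_equation_renorm_solution (ε C₀ D₀ : ℝ) (hε : 0 ≤ ε) :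
    ∀ n : ℕ,
      |(C₀ * Real.cos ((n + 2 : ℕ) * ((Real.pi + ε) / 2))
            + D₀ * Real.sin ((n + 2 : ℕ) * ((Real.pi + ε) / 2)))
          + ε * (C₀ * Real.cos ((n + 1 : ℕ) * ((Real.pi + ε) / 2))
            + D₀ * Real.sin ((n + 1 : ℕ) * ((Real.pi + ε) / 2)))
          + (C₀ * Real.cos ((n : ℕ) * ((Real.pi + ε) / 2))
            + D₀ * Real.sin ((n : ℕ) * ((Real.pi + ε) / 2)))|
        ≤ (|C₀| + |D₀|) * ε ^ 3 / 24 := by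
  intro n
  set θ := (π + ε) / 2
  set x := (n : ℝ) * θ
  have hcos : 2 * cos θ = -(2 * sin (ε / 2)) := by
    rw [show θ = ε / 2 + π / 2 by ring, cos_add_pi_div_two]; ring
  have hrec := mul_cos_add_mul_sin_add_two_mul_add C₀ D₀ x θ
  rw [show ((n + 2 : ℕ) : ℝ) * θ = x + 2 * θ by push_cast; ring,
    show ((n + 1 : ℕ) : ℝ) * θ = x + θ by push_cast; ring]
  calc _ = |ε - 2 * sin (ε / 2)| * |C₀ * cos (x + θ) + D₀ * sin (x + θ)| := by
          rw [← abs_mul]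
          congr 1
          linear_combination hrec + (C₀ * cos (x + θ) + D₀ * sin (x + θ)) * hcos
    _ ≤ ε ^ 3 / 24 * (|C₀| + |D₀|) := by
          gcongr
          exacts [abs_sub_two_mul_sin_half_le hε, abs_mul_cos_add_mul_sin_le C₀ D₀ _]
    _ = (|C₀| + |D₀|) * ε ^ 3 / 24 := by ring
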